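/- arXiv:1105.3848 — 2 statements merged into one kernel-verified Lean document; each statement's English description precedes it below -/
import Mathlib

section
/- (Lemma 2.3) Let A be a constant-rank operator satisfying Assumption A2. If ξ ∈ ℝ^d with ξ_d ≠ 0, then every row of 𝔸'(ξ')_− can be written as a linear combination of the rows of A^(d)_+; here ξ' = (ξ_1,…,ξ_{d−1}). -/
open MeasureTheory Filter Topology Matrix
open scoped ENNReal

noncomputable section

/-- The open unit cube `(0,1)^n ⊂ ℝ^n`. -/
def unitCube (n : ℕ) : Set (Fin n → ℝ) := Set.univ.pi fun _ => Set.Ioo (0:ℝ) 1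

/-- A function on `ℝ^n` which is `1`-periodic in each coordinate direction,
i.e. a function on the torus `𝕋^n`. -/
def IsPeriodicFn {n : ℕ} {E : Type*} (w : (Fin n → ℝ) → E) : Prop :=
  ∀ (x : Fin n → ℝ) (k : Fin n), w (x + Pi.single k 1) = w x

/-- The symbol `𝔸(ξ) = Σ_k ξ_k A^(k)` of the operator `𝒜 u = Σ_k A^(k) ∂_k u`. -/
def symb {n l m : ℕ} (A : Fin n → Matrix (Fin l) (Fin m) ℝ) (ξ : Fin n → ℝ) :
    Matrix (Fin l) (Fin m) ℝ :=
  ∑ k, ξ k • A k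

/-- Assumption A1: constant-rank property. -/
def ConstantRank {n l m : ℕ} (A : Fin n → Matrix (Fin l) (Fin m) ℝ) (r : ℕ) : Prop :=
  ∀ ξ : Fin n → ℝ, ξ ≠ 0 → (symb A ξ).rank = r

/-- Classical (pointwise) application of the operator `Σ_k B^(k) ∂_k` to a map `u`. -/
def opApply {n l m : ℕ} (B : Fin n → Matrix (Fin l) (Fin m) ℝ)
    (u : (Fin n → ℝ) → Fin m → ℝ) (x : Fin n → ℝ) : Fin l → ℝ :=
  ∑ k, B k *ᵥ fderiv ℝ u x (Pi.single k 1)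

/-- `Σ_k B^(k) ∂_k u = 0` distributionally in the open set `Ω`:
`∫ u · Bᵀ ∂φ = 0` for all test functions `φ ∈ C_c^∞(Ω; ℝ^l)`. -/
def FreeOn {n l m : ℕ} (B : Fin n → Matrix (Fin l) (Fin m) ℝ) (Ω : Set (Fin n → ℝ))
    (u : (Fin n → ℝ) → Fin m → ℝ) : Prop :=
  ∀ φ : (Fin n → ℝ) → Fin l → ℝ,
    ContDiff ℝ (⊤ : ℕ∞) φ → HasCompactSupport φ → tsupport φ ⊆ Ω →
    ∑ k, ∫ x in Ω, (B k *ᵥ u x) ⬝ᵥ fderiv ℝ φ x (Pi.single k 1) = 0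

/-- `Σ_k B^(k) ∂_k u = 0` distributionally on the torus `𝕋^n`: the test functions are
smooth periodic functions. -/
def FreeOnTorus {n l m : ℕ} (B : Fin n → Matrix (Fin l) (Fin m) ℝ)
    (u : (Fin n → ℝ) → Fin m → ℝ) : Prop :=
  ∀ φ : (Fin n → ℝ) → Fin l → ℝ, ContDiff ℝ (⊤ : ℕ∞) φ → IsPeriodicFn φ →
    ∑ k, ∫ x in unitCube n, (B k *ᵥ u x) ⬝ᵥ fderiv ℝ φ x (Pi.single k 1) = 0

/-- The coefficient matrices of the rescaled operator
`𝒜_ε = Σ_{k<d} A^(k) ∂_k + ε⁻¹ A^(d) ∂_d` (total dimension is `d+1`). -/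
def AepsMat {d l m : ℕ} (A : Fin (d+1) → Matrix (Fin l) (Fin m) ℝ) (ε : ℝ) :
    Fin (d+1) → Matrix (Fin l) (Fin m) ℝ :=
  fun k => if k = Fin.last d then ε⁻¹ • A k else A k

open scoped Classical in
/-- The coefficient matrices of the limit operator `𝒜₀`: its `i`-th row is
`[A^(d)]^i ∂_d` if the `i`-th row of `A^(d)` is nonzero, and `Σ_{k<d} [A^(k)]^i ∂_k`
otherwise. -/
def A0Mat {d l m : ℕ} (A : Fin (d+1) → Matrix (Fin l) (Fin m) ℝ) :
    Fin (d+1) → Matrix (Fin l) (Fin m) ℝ :=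
  fun k => Matrix.of fun i j =>
    if A (Fin.last d) i = 0 then (if k = Fin.last d then 0 else A k i j)
    else (if k = Fin.last d then A k i j else 0)

open scoped Classical in
/-- Assumption A2: the number of nonzero rows of `A^(d)` equals its rank. -/
def NoDependentRows {d l m : ℕ} (A : Fin (d+1) → Matrix (Fin l) (Fin m) ℝ) : Prop :=
  (Finset.univ.filter fun i : Fin l => A (Fin.last d) i ≠ 0).card = (A (Fin.last d)).rank

/-- `B` is the Moore–Penrose pseudoinverse of `M`. -/
def IsMoorePenrose {l m : ℕ} (M : Matrix (Fin l) (Fin m) ℝ)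
    (B : Matrix (Fin m) (Fin l) ℝ) : Prop :=
  M * B * M = M ∧ B * M * B = B ∧ (M * B)ᵀ = M * B ∧ (B * M)ᵀ = B * M

/-- Assumption A4: the antisymmetry relation
`A^(k) (A^(d))† A^(j) = −A^(j) (A^(d))† A^(k)` for `k, j < d`. -/
def Antisymmetry {d l m : ℕ} (A : Fin (d+1) → Matrix (Fin l) (Fin m) ℝ) : Prop :=
  ∃ B : Matrix (Fin m) (Fin l) ℝ, IsMoorePenrose (A (Fin.last d)) B ∧
    ∀ k j : Fin (d+1), k ≠ Fin.last d → j ≠ Fin.last d →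
      A k * B * A j = -(A j * B * A k)

/-- The thin domain `Ω₁ = ω × (0,1) ⊂ ℝ^{d+1}`, for a cross-section `ω ⊂ ℝ^d`. -/
def thinDomain {d : ℕ} (ω : Set (Fin d → ℝ)) : Set (Fin (d+1) → ℝ) :=
  {x | (fun i : Fin d => x i.castSucc) ∈ ω ∧ x (Fin.last d) ∈ Set.Ioo (0:ℝ) 1}

/-- Weak convergence `u_j ⇀ u₀` in `L^p(Ω; ℝ^m)`, by testing against all
`g ∈ L^{p'}(Ω; ℝ^m)`. -/
def WeakLpTendsto {n m : ℕ} (p : ℝ) (Ω : Set (Fin n → ℝ))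
    (u : ℕ → (Fin n → ℝ) → Fin m → ℝ) (u₀ : (Fin n → ℝ) → Fin m → ℝ) : Prop :=
  ∀ g : (Fin n → ℝ) → Fin m → ℝ,
    MemLp g (ENNReal.ofReal (p / (p - 1))) (volume.restrict Ω) →
    Tendsto (fun j => ∫ x in Ω, u j x ⬝ᵥ g x) atTop (𝓝 (∫ x in Ω, u₀ x ⬝ᵥ g x))

/-- `ε_j ↓ 0`. -/
def TendstoDownZero (ε : ℕ → ℝ) : Prop :=
  (∀ j, 0 < ε j) ∧ Antitone ε ∧ Tendsto ε atTop (𝓝 0)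

/-- `f` is a Carathéodory integrand on `Ω × ℝ^m`. -/
def Caratheodory {n m : ℕ} (Ω : Set (Fin n → ℝ))
    (f : (Fin n → ℝ) → (Fin m → ℝ) → ℝ) : Prop :=
  (∀ v, AEMeasurable (fun x => f x v) (volume.restrict Ω)) ∧
  (∀ᵐ x ∂(volume.restrict Ω), Continuous (f x))

/-- `p`-coercivity and `p`-growth: `c|v|^p − C ≤ f(x,v) ≤ C(1+|v|^p)`. -/
def PGrowth {n m : ℕ} (p c C : ℝ) (Ω : Set (Fin n → ℝ))
    (f : (Fin n → ℝ) → (Fin m → ℝ) → ℝ) : Prop :=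
  ∀ᵐ x ∂(volume.restrict Ω), ∀ v : Fin m → ℝ,
    c * ‖v‖ ^ p - C ≤ f x v ∧ f x v ≤ C * (1 + ‖v‖ ^ p)

/-- The `ℬ`-quasiconvex envelope of `f` at `v`. -/
def QAenv {n l m : ℕ} (B : Fin n → Matrix (Fin l) (Fin m) ℝ)
    (f : (Fin m → ℝ) → ℝ) (v : Fin m → ℝ) : ℝ :=
  sInf {t | ∃ w : (Fin n → ℝ) → Fin m → ℝ, ContDiff ℝ (⊤ : ℕ∞) w ∧ IsPeriodicFn w ∧
    FreeOnTorus B w ∧ (∫ y in unitCube n, w y) = 0 ∧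
    t = ∫ y in unitCube n, f (v + w y)}

/-- The exponent `p' = p/(p−1)` dual to `p` (with `1' = ∞`), as an extended real. -/
def conjE (p : ℝ) : ℝ≥0∞ := if p ≤ 1 then ∞ else ENNReal.ofReal (p / (p - 1))

/-- The `W^{-1,p}(𝕋^n)`-norm of (the distribution induced by) a function `v`, by duality
with smooth periodic test functions in the unit ball of `W^{1,p'}(𝕋^n)`. -/
def Wneg1NormTorus {n l : ℕ} (p : ℝ) (v : (Fin n → ℝ) → Fin l → ℝ) : ℝ :=
  sSup {t | ∃ φ : (Fin n → ℝ) → Fin l → ℝ, ContDiff ℝ (⊤ : ℕ∞) φ ∧ IsPeriodicFn φ ∧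
    eLpNorm φ (conjE p) (volume.restrict (unitCube n)) +
      eLpNorm (fun x => fderiv ℝ φ x) (conjE p) (volume.restrict (unitCube n)) ≤ 1 ∧
    t = |∫ x in unitCube n, v x ⬝ᵥ φ x|}

/-- The `W^{-1,p}(𝕋^n)`-norm of the distribution `Σ_k B^(k) ∂_k u` for `u ∈ L^p`, by
duality with smooth periodic test functions in the unit ball of `W^{1,p'}(𝕋^n)`. -/
def Wneg1NormTorusOp {n l m : ℕ} (p : ℝ) (B : Fin n → Matrix (Fin l) (Fin m) ℝ)
    (u : (Fin n → ℝ) → Fin m → ℝ) : ℝ :=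
  sSup {t | ∃ φ : (Fin n → ℝ) → Fin l → ℝ, ContDiff ℝ (⊤ : ℕ∞) φ ∧ IsPeriodicFn φ ∧
    eLpNorm φ (conjE p) (volume.restrict (unitCube n)) +
      eLpNorm (fun x => fderiv ℝ φ x) (conjE p) (volume.restrict (unitCube n)) ≤ 1 ∧
    t = |∑ k, ∫ x in unitCube n, (B k *ᵥ u x) ⬝ᵥ fderiv ℝ φ x (Pi.single k 1)|}

/-- `Q^η_{𝒜₀} f` of (1.5): infimum over smooth mean-zero `w` which are approximately
`𝒜₀`-free, namely `η ‖𝒜₀ w‖_{W^{-1,1}(𝕋^n)} ≤ 1`. -/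
def Qeta {n l m : ℕ} (B : Fin n → Matrix (Fin l) (Fin m) ℝ) (η : ℝ)
    (f : (Fin m → ℝ) → ℝ) (v : Fin m → ℝ) : ℝ :=
  sInf {t | ∃ w : (Fin n → ℝ) → Fin m → ℝ, ContDiff ℝ (⊤ : ℕ∞) w ∧ IsPeriodicFn w ∧
    η * Wneg1NormTorus 1 (opApply B w) ≤ 1 ∧ (∫ y in unitCube n, w y) = 0 ∧
    t = ∫ y in unitCube n, f (v + w y)}

/-- The asymptotic `𝒜₀`-quasiconvex envelope `Q^∞_{𝒜₀} f = sup_{η>0} Q^η_{𝒜₀} f`. -/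
def Qinf {n l m : ℕ} (B : Fin n → Matrix (Fin l) (Fin m) ℝ)
    (f : (Fin m → ℝ) → ℝ) (v : Fin m → ℝ) : ℝ :=
  sSup {t | ∃ η : ℝ, 0 < η ∧ t = Qeta B η f v}

/-- Assumption A3: every `𝒜₀`-free field in `L^p(Ω₁; ℝ^m)` can be approximated in
`L^p(Ω₁)` by fields which are `𝒜₀`-free on the torus `𝕋^{d+1}`. -/
def ApproxExtension {d l m : ℕ} (p : ℝ) (A : Fin (d+1) → Matrix (Fin l) (Fin m) ℝ)
    (ω : Set (Fin d → ℝ)) : Prop :=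
  ∀ u : (Fin (d+1) → ℝ) → Fin m → ℝ,
    MemLp u (ENNReal.ofReal p) (volume.restrict (thinDomain ω)) →
    FreeOn (A0Mat A) (thinDomain ω) u →
    ∃ v : ℕ → (Fin (d+1) → ℝ) → Fin m → ℝ,
      (∀ j, MemLp (v j) (ENNReal.ofReal p) (volume.restrict (unitCube (d+1))) ∧
        FreeOnTorus (A0Mat A) (v j)) ∧
      Tendsto (fun j => eLpNorm (fun x => v j x - u x) (ENNReal.ofReal p)
        (volume.restrict (thinDomain ω))) atTop (𝓝 0)


/-- Lemma 2.3. Let `𝒜` be a constant-rank operator satisfying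
Assumption A2 (so the `r` nonzero rows of `A^(d)` are linearly independent, and the rows
with `A^(d)`-row zero form the "minus" part). If `ξ ∈ ℝ^{d+1}` with `ξ_d ≠ 0`, then every
row of `𝔸'(ξ')₋` — i.e. every row `i` of `𝔸'(ξ') = Σ_{k<d} ξ_k A^(k)` for which the `i`-th
row of `A^(d)` vanishes — is a linear combination of the (nonzero) rows of `A^(d)`. -/
theorem minus_rows_lin_dependent_on_Ad
    {d l m r : ℕ} (A : Fin (d+1) → Matrix (Fin l) (Fin m) ℝ)
    (hA1 : ConstantRank A r) (hA2 : NoDependentRows A)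
    (hr : (A (Fin.last d)).rank = r) :
    ∀ ξ : Fin (d+1) → ℝ, ξ (Fin.last d) ≠ 0 →
      ∀ i : Fin l, A (Fin.last d) i = 0 →
        ∃ c : Fin l → ℝ, (∀ i' : Fin l, A (Fin.last d) i' = 0 → c i' = 0) ∧
          ∀ j : Fin m, (∑ k ∈ Finset.univ.erase (Fin.last d), ξ k * A k i j) =
            ∑ i' : Fin l, c i' * A (Fin.last d) i' j := by
  classical
  intro ξ hξd i hi
  -- the "truncated" rows 𝔸'(ξ')
  set w : Fin l → (Fin m → ℝ) :=
    fun i'' => fun j => ∑ k ∈ Finset.univ.erase (Fin.last d), ξ k * A k i'' j with hw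
  suffices hv : w i ∈ Submodule.span ℝ
      (Set.range fun s : {i' : Fin l // A (Fin.last d) i' ≠ 0} => A (Fin.last d) s.1) by
    obtain ⟨co, hco⟩ := (Submodule.mem_span_range_iff_exists_fun ℝ).1 hv
    refine ⟨fun i' => if h : A (Fin.last d) i' = 0 then 0 else co ⟨i', h⟩,
      fun i' h => by simp [h], ?_⟩
    intro j
    have hcoj := congrFun hco j
    simp only [Finset.sum_apply, Pi.smul_apply, smul_eq_mul] at hcoj
    show w i j = _
    rw [← hcoj]
    rw [← Fintype.sum_subtype_add_sum_subtype (fun i' => A (Fin.last d) i' ≠ 0)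
      (fun i' => (if h : A (Fin.last d) i' = 0 then 0 else co ⟨i', h⟩) * A (Fin.last d) i' j)]
    have hz : (∑ x : {i' : Fin l // ¬ A (Fin.last d) i' ≠ 0},
        (if h : A (Fin.last d) x.1 = 0 then 0 else co ⟨x.1, h⟩) * A (Fin.last d) x.1 j) = 0 := by
      apply Finset.sum_eq_zero
      rintro ⟨x, hx⟩ _
      rw [not_not] at hx
      simp [hx]
    rw [hz, add_zero]
    refine Finset.sum_congr rfl ?_
    rintro ⟨x, hx⟩ _
    rw [dif_neg hx]
  -- main argument, by contradiction
  by_contra hv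
  -- the nonzero rows of A^(d) are linearly independent
  have hspanS : Submodule.span ℝ
        (Set.range fun s : {i' : Fin l // A (Fin.last d) i' ≠ 0} => A (Fin.last d) s.1)
      = Submodule.span ℝ (Set.range fun i' : Fin l => A (Fin.last d) i') := by
    apply le_antisymm
    · exact Submodule.span_mono (by rintro _ ⟨s, rfl⟩; exact ⟨s.1, rfl⟩)
    · rw [Submodule.span_le]
      rintro _ ⟨i', rfl⟩
      show A (Fin.last d) i' ∈ _
      by_cases h : A (Fin.last d) i' = 0
      · rw [h]; exact zero_mem _
      · exact Submodule.subset_span ⟨⟨i', h⟩, rfl⟩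
  have hcardS : Fintype.card {i' : Fin l // A (Fin.last d) i' ≠ 0} = r := by
    rw [Fintype.card_subtype]
    exact hA2.trans hr
  have hfinS : Module.finrank ℝ (Submodule.span ℝ
      (Set.range fun s : {i' : Fin l // A (Fin.last d) i' ≠ 0} => A (Fin.last d) s.1)) = r := by
    rw [hspanS]
    have := (A (Fin.last d)).rank_eq_finrank_span_row
    rw [hr] at this
    exact this.symm
  have hindS : LinearIndependent ℝ
      (fun s : {i' : Fin l // A (Fin.last d) i' ≠ 0} => A (Fin.last d) s.1) := by
    rw [linearIndependent_iff_card_eq_finrank_span, hcardS]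
    exact hfinS.symm
  -- the independent family N = (rows of A^(d) on S) ∪ {w i}
  set N : Option {i' : Fin l // A (Fin.last d) i' ≠ 0} → (Fin m → ℝ) :=
    fun o => Option.casesOn' o (w i) (fun s => A (Fin.last d) s.1) with hN
  have hNind : LinearIndependent ℝ N := linearIndependent_option'.2 ⟨hindS, hv⟩
  -- a linear map L with L (N o) = δ_o
  set B : Module.Basis (Option {i' : Fin l // A (Fin.last d) i' ≠ 0}) ℝ
    (Submodule.span ℝ (Set.range N)) := Module.Basis.span hNind with hB
  obtain ⟨L, hL⟩ := LinearMap.exists_extend (B.equivFun.toLinearMap)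
  have hLN : ∀ o o', L (N o) o' = if o = o' then (1:ℝ) else 0 := by
    intro o o'
    have h2 := LinearMap.congr_fun hL (B o)
    simp only [LinearMap.coe_comp, Function.comp_apply, Submodule.coe_subtype,
      LinearEquiv.coe_coe] at h2
    rw [Module.Basis.span_apply] at h2
    rw [h2, ← Module.Basis.span_apply hNind o, ← hB, Module.Basis.equivFun_self]
  -- the family of square matrices
  set Q : ℝ → Matrix (Option {i' : Fin l // A (Fin.last d) i' ≠ 0})
      (Option {i' : Fin l // A (Fin.last d) i' ≠ 0}) ℝ :=
    fun s => Matrix.of fun o o' => Option.casesOn' o (L (w i) o')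
      (fun s' => s * L (w s'.1) o' + L (A (Fin.last d) s'.1) o') with hQ
  have hQ0 : Q 0 = 1 := by
    ext o o'
    have h0 := hLN o o'
    cases o with
    | none => simpa [Q, Matrix.one_apply, N] using h0
    | some s' => simpa [Q, Matrix.one_apply, N] using h0
  have hcont : Continuous fun s : ℝ => (Q s).det := by
    apply Continuous.matrix_det
    apply continuous_matrix
    intro o o'
    cases o with
    | none => exact continuous_const
    | some s' => exact (continuous_id.mul continuous_const).add continuous_const
  have hev : ∀ᶠ s in 𝓝[≠] (0:ℝ), (Q s).det ≠ 0 := by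
    refine Filter.Eventually.filter_mono nhdsWithin_le_nhds ?_
    apply hcont.continuousAt.eventually_ne
    rw [hQ0, Matrix.det_one]
    exact one_ne_zero
  obtain ⟨s, hdet, hs0'⟩ := (hev.and self_mem_nhdsWithin).exists
  have hs0 : s ≠ 0 := hs0'
  -- the direction ξ_t with t = s⁻¹ in the last coordinate
  set t : ℝ := s⁻¹ with ht
  set ξt : Fin (d+1) → ℝ := fun k => if k = Fin.last d then t else ξ k with hξt
  have hξt0 : ξt ≠ 0 := by
    intro h0
    have := congrFun h0 (Fin.last d)
    simp [ξt, t, hs0] at this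
  have hrank : (symb A ξt).rank = r := hA1 ξt hξt0
  have hrowfun : ∀ i'', symb A ξt i'' = w i'' + t • A (Fin.last d) i'' := by
    intro i''
    funext j
    show symb A ξt i'' j = w i'' j + t * A (Fin.last d) i'' j
    rw [symb, ← Finset.sum_erase_add _ _ (Finset.mem_univ (Fin.last d))]
    simp only [Matrix.add_apply, Matrix.sum_apply, Matrix.smul_apply, smul_eq_mul]
    congr 1
    · apply Finset.sum_congr rfl
      intro k hk
      simp only [Finset.mem_erase] at hk
      simp only [hξt]
      rw [if_neg hk.1]
    · simp [hξt]
  -- the rows of symb A ξt at the selected r+1 indices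
  set H : Option {i' : Fin l // A (Fin.last d) i' ≠ 0} → (Fin m → ℝ) :=
    fun o => Option.casesOn' o (symb A ξt i) (fun s' => symb A ξt s'.1) with hH
  have hHnone : H none = w i := by
    show symb A ξt i = w i
    rw [hrowfun i, hi]
    simp
  have hHsome : ∀ s', H (some s') = w s'.1 + t • A (Fin.last d) s'.1 := fun s' => hrowfun s'.1
  -- independence of the image family under L
  have hHL : LinearIndependent ℝ (fun o => L (H o)) := by
    have hunit : IsUnit (Q s) := (Matrix.isUnit_iff_isUnit_det _).2 (isUnit_iff_ne_zero.2 hdet)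
    have hrowsQ : LinearIndependent ℝ (fun o => Q s o) :=
      Matrix.linearIndependent_rows_iff_isUnit.2 hunit
    set c : Option {i' : Fin l // A (Fin.last d) i' ≠ 0} → ℝˣ :=
      fun o => Option.casesOn' o 1 (fun _ => Units.mk0 s hs0) with hc
    have hQrow : (fun o => Q s o) = fun o => c o • L (H o) := by
      funext o o'
      cases o with
      | none =>
        simp [Q, c, hHnone]
      | some s' =>
        show s * L (w s'.1) o' + L (A (Fin.last d) s'.1) o' = (c (some s') • L (H (some s'))) o'
        rw [hHsome s', map_add, _root_.map_smul]
        simp only [hc, Option.casesOn'_some, Units.smul_def, Units.val_mk0, Pi.smul_apply,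
          Pi.add_apply, smul_eq_mul, ht]
        rw [mul_add, ← mul_assoc, mul_inv_cancel₀ hs0, one_mul]
    rw [hQrow] at hrowsQ
    have h3 := hrowsQ.units_smul fun o => (c o)⁻¹
    have h4 : ((fun o => (c o)⁻¹) • fun o => c o • L (H o)) = fun o => L (H o) := by
      funext o
      show (c o)⁻¹ • (c o • L (H o)) = L (H o)
      rw [inv_smul_smul]
    rwa [h4] at h3
  have hHrows : LinearIndependent ℝ H := hHL.of_comp L
  -- contradiction by dimension counting
  have hle : Submodule.span ℝ (Set.range H)
      ≤ Submodule.span ℝ (Set.range fun i'' : Fin l => symb A ξt i'') := by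
    apply Submodule.span_mono
    rintro _ ⟨o, rfl⟩
    cases o with
    | none => exact ⟨i, rfl⟩
    | some s' => exact ⟨s'.1, rfl⟩
  have hd1 : Module.finrank ℝ (Submodule.span ℝ (Set.range H)) = r + 1 := by
    rw [finrank_span_eq_card hHrows, Fintype.card_option, hcardS]
  have hd2 : Module.finrank ℝ
      (Submodule.span ℝ (Set.range fun i'' : Fin l => symb A ξt i'')) = r := by
    have := (symb A ξt).rank_eq_finrank_span_row
    rw [hrank] at this
    exact this.symm
  have hmono := Submodule.finrank_mono hle
  rw [hd1, hd2] at hmono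
  omega

end
end

section
/- (Lemma 4.3) Under Assumptions A1 and A2 and with ε_j ↓ 0, for every ξ ∈ ℝ^d the orthogonal projections ℙ_{ε_j}(ξ) onto ker 𝔸_{ε_j}(ξ) converge, as j → ∞, to the orthogonal projection P̃_0(ξ) onto ker Ã_0(ξ). -/
open MeasureTheory Filter Topology Matrix
open scoped ENNReal

noncomputable section

/-- `P` is the orthogonal projection of `ℝ^m` onto `ker M`. -/
def IsOrthProjOntoKer {l m : ℕ} (M : Matrix (Fin l) (Fin m) ℝ)
    (P : Matrix (Fin m) (Fin m) ℝ) : Prop :=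
  Pᵀ = P ∧ P * P = P ∧ (∀ v : Fin m → ℝ, M *ᵥ (P *ᵥ v) = 0) ∧
  (∀ v : Fin m → ℝ, M *ᵥ v = 0 → P *ᵥ v = v)

open scoped Classical in
/-- The auxiliary symbol `Ã₀(ξ)`: its `i`-th row is `[A^(d)]^i ξ_d` if `[A^(d)]^i ξ_d ≠ 0`,
and `Σ_{k<d} [A^(k)]^i ξ_k` if `[A^(d)]^i ξ_d = 0`. -/
def A0tildeSymb {d l m : ℕ} (A : Fin (d+1) → Matrix (Fin l) (Fin m) ℝ)
    (ξ : Fin (d+1) → ℝ) : Matrix (Fin l) (Fin m) ℝ :=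
  Matrix.of fun i j =>
    if ξ (Fin.last d) • A (Fin.last d) i = (0 : Fin m → ℝ) then
      ∑ k ∈ Finset.univ.erase (Fin.last d), ξ k * A k i j
    else ξ (Fin.last d) * A (Fin.last d) i j


/-! ### Auxiliary lemmas for Lemma 4.3 -/

private lemma matrix_ext_of_mulVec {m p : ℕ} {X Y : Matrix (Fin p) (Fin m) ℝ}
    (h : ∀ v, X *ᵥ v = Y *ᵥ v) : X = Y := by
  ext i j
  have := congrFun (h (Pi.single j 1)) i
  simpa [Matrix.mulVec_single] using this

/-- An orthogonal projection onto the kernel of a matrix is unique (two matrices with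
the same kernel have the same orthogonal projection). -/
private lemma orthProj_unique {l l' m : ℕ} {M : Matrix (Fin l) (Fin m) ℝ}
    {M' : Matrix (Fin l') (Fin m) ℝ} {P P' : Matrix (Fin m) (Fin m) ℝ}
    (hP : IsOrthProjOntoKer M P) (hP' : IsOrthProjOntoKer M' P')
    (hker : ∀ v : Fin m → ℝ, M *ᵥ v = 0 ↔ M' *ᵥ v = 0) : P = P' := by
  obtain ⟨hPt, -, hP1, hP2⟩ := hP
  obtain ⟨hP't, -, hP'1, hP'2⟩ := hP'
  have h1 : P' * P = P := matrix_ext_of_mulVec fun v => by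
    rw [← Matrix.mulVec_mulVec]
    exact hP'2 _ ((hker _).mp (hP1 v))
  have h2 : P * P' = P' := matrix_ext_of_mulVec fun v => by
    rw [← Matrix.mulVec_mulVec]
    exact hP2 _ ((hker _).mpr (hP'1 v))
  calc P = P' * P := h1.symm
    _ = (P * P')ᵀ := by rw [Matrix.transpose_mul, hPt, hP't]
    _ = P'ᵀ := by rw [h2]
    _ = P' := hP't

private lemma mul_row {ι : Type*} {m q : ℕ} (X : Matrix ι (Fin m) ℝ)
    (Y : Matrix (Fin m) (Fin q) ℝ) (i : ι) : (X * Y) i = X i ᵥ* Y := by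
  funext j
  simp [Matrix.mul_apply, Matrix.vecMul, dotProduct]

/-- If the Gram matrix `W Wᵀ` is invertible, then `c ↦ c ᵥ* W` is injective. -/
private lemma gram_inj {ι : Type} [Fintype ι] [DecidableEq ι] {m : ℕ}
    (W : Matrix ι (Fin m) ℝ) (hdet : (W * Wᵀ).det ≠ 0) :
    Function.Injective W.vecMulLinear := by
  refine (injective_iff_map_eq_zero _).mpr fun c hc => ?_
  rw [Matrix.vecMulLinear_apply] at hc
  have h2 : c ᵥ* (W * Wᵀ) = 0 := by rw [← Matrix.vecMul_vecMul, hc, Matrix.zero_vecMul]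
  have h3 := congrArg (fun y => y ᵥ* (W * Wᵀ)⁻¹) h2
  simpa [Matrix.vecMul_vecMul, Matrix.mul_nonsing_inv _ hdet.isUnit, Matrix.vecMul_one,
    Matrix.zero_vecMul] using h3

/-- If `c ↦ c ᵥ* W` is injective, the Gram matrix `W Wᵀ` is invertible. -/
private lemma gram_det_ne_zero {ι : Type} [Fintype ι] [DecidableEq ι] {m : ℕ}
    (W : Matrix ι (Fin m) ℝ) (hinj : Function.Injective W.vecMulLinear) :
    (W * Wᵀ).det ≠ 0 := by
  intro h0
  obtain ⟨v, hv, hGv⟩ := Matrix.exists_mulVec_eq_zero_iff.mpr h0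
  have h1 : v ⬝ᵥ ((W * Wᵀ) *ᵥ v) = 0 := by rw [hGv, dotProduct_zero]
  rw [← Matrix.mulVec_mulVec, Matrix.dotProduct_mulVec, Matrix.mulVec_transpose] at h1
  have h2 : v ᵥ* W = 0 := dotProduct_self_eq_zero.mp h1
  have h3 : W.vecMulLinear v = W.vecMulLinear 0 := by
    simp [Matrix.vecMulLinear_apply, h2, Matrix.zero_vecMul]
  exact hv (hinj h3)

/-- The basic algebraic properties of `Q = 1 - Wᵀ (W Wᵀ)⁻¹ W`, the orthogonal projection
onto the kernel of `W`. -/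
private lemma orthproj_of_gram {ι : Type} [Fintype ι] [DecidableEq ι] {m : ℕ}
    (W : Matrix ι (Fin m) ℝ) (hdet : (W * Wᵀ).det ≠ 0) :
    ((1 : Matrix (Fin m) (Fin m) ℝ) - Wᵀ * ((W * Wᵀ)⁻¹ * W))ᵀ
        = 1 - Wᵀ * ((W * Wᵀ)⁻¹ * W) ∧
    ((1 : Matrix (Fin m) (Fin m) ℝ) - Wᵀ * ((W * Wᵀ)⁻¹ * W))
        * ((1 : Matrix (Fin m) (Fin m) ℝ) - Wᵀ * ((W * Wᵀ)⁻¹ * W))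
        = 1 - Wᵀ * ((W * Wᵀ)⁻¹ * W) ∧
    W * ((1 : Matrix (Fin m) (Fin m) ℝ) - Wᵀ * ((W * Wᵀ)⁻¹ * W)) = 0 ∧
    (∀ v, W *ᵥ v = 0 →
      ((1 : Matrix (Fin m) (Fin m) ℝ) - Wᵀ * ((W * Wᵀ)⁻¹ * W)) *ᵥ v = v) := by
  have hunit : IsUnit (W * Wᵀ).det := hdet.isUnit
  have hGt : (W * Wᵀ)ᵀ = W * Wᵀ := by rw [Matrix.transpose_mul, Matrix.transpose_transpose]
  have hWQ : W * ((1 : Matrix (Fin m) (Fin m) ℝ) - Wᵀ * ((W * Wᵀ)⁻¹ * W)) = 0 := by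
    rw [Matrix.mul_sub, Matrix.mul_one, ← Matrix.mul_assoc, ← Matrix.mul_assoc,
      Matrix.mul_nonsing_inv _ hunit, Matrix.one_mul, sub_self]
  refine ⟨?_, ?_, hWQ, ?_⟩
  · rw [Matrix.transpose_sub, Matrix.transpose_one, Matrix.transpose_mul, Matrix.transpose_mul,
      Matrix.transpose_transpose, Matrix.transpose_nonsing_inv, hGt, Matrix.mul_assoc]
  · have hXQ : (Wᵀ * ((W * Wᵀ)⁻¹ * W))
        * ((1 : Matrix (Fin m) (Fin m) ℝ) - Wᵀ * ((W * Wᵀ)⁻¹ * W)) = 0 := by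
      rw [Matrix.mul_assoc, Matrix.mul_assoc, hWQ, Matrix.mul_zero, Matrix.mul_zero]
    rw [Matrix.sub_mul, Matrix.one_mul, hXQ, sub_zero]
  · intro v hv
    rw [Matrix.sub_mulVec, Matrix.one_mulVec, ← Matrix.mulVec_mulVec, ← Matrix.mulVec_mulVec,
      hv, Matrix.mulVec_zero, Matrix.mulVec_zero, sub_zero]

/-- A submodule comparison by rank: if `W`'s row space is contained in `C`'s row space and
`C` has rank equal to the number of rows of `W`, with `W` of full row rank, the row
spaces agree. -/
private lemma range_eq_of_le_of_rank {ι : Type} [Fintype ι] {m l' : ℕ}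
    (W : Matrix ι (Fin m) ℝ) (C : Matrix (Fin l') (Fin m) ℝ)
    (hinj : Function.Injective W.vecMulLinear)
    (hle : LinearMap.range W.vecMulLinear ≤ LinearMap.range C.vecMulLinear)
    (hrank : C.rank = Fintype.card ι) :
    LinearMap.range W.vecMulLinear = LinearMap.range C.vecMulLinear := by
  apply Submodule.eq_of_le_of_finrank_le hle
  have h1 : Module.finrank ℝ (LinearMap.range C.vecMulLinear) = C.rank := by
    rw [← Matrix.rank_transpose C, ← Matrix.mulVecLin_transpose]
    rfl
  have h2 : Module.finrank ℝ (LinearMap.range W.vecMulLinear) = Fintype.card ι := by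
    rw [LinearMap.finrank_range_of_inj hinj, Module.finrank_fintype_fun_eq_card]
  rw [h1, h2, hrank]

private lemma continuous_vecMul_right {m : ℕ} (v : Fin m → ℝ) :
    Continuous fun X : Matrix (Fin m) (Fin m) ℝ => v ᵥ* X := by
  apply continuous_pi; intro j
  show Continuous fun X : Matrix (Fin m) (Fin m) ℝ => ∑ k, v k * X k j
  exact continuous_finset_sum _ fun k _ => continuous_const.mul (continuous_id.matrix_elem k j)

/-- Lemma 4.3. Under Assumptions A1 and A2, and with `ε_j ↓ 0`, for
every `ξ ∈ ℝ^{d+1}` the orthogonal projections `ℙ_{ε_j}(ξ)` onto `ker 𝔸_{ε_j}(ξ)`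
converge, as `j → ∞`, to the orthogonal projection `P̃₀(ξ)` onto `ker Ã₀(ξ)`. -/
theorem projection_symbol_convergence
    {d l m r : ℕ} (A : Fin (d+1) → Matrix (Fin l) (Fin m) ℝ)
    (hA1 : ConstantRank A r) (hA2 : NoDependentRows A)
    (ε : ℕ → ℝ) (hε : TendstoDownZero ε) :
    ∀ ξ : Fin (d+1) → ℝ,
      ∀ P : ℕ → Matrix (Fin m) (Fin m) ℝ, ∀ P0 : Matrix (Fin m) (Fin m) ℝ,
        (∀ j, IsOrthProjOntoKer (symb (AepsMat A (ε j)) ξ) (P j)) →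
        IsOrthProjOntoKer (A0tildeSymb A ξ) P0 →
        Tendsto (fun j => P j) atTop (𝓝 P0) := by
  classical
  obtain ⟨hεpos, -, hεlim⟩ := hε
  intro ξ P P0 hP hP0
  -- the symbol of the rescaled operator, split into the first `d` terms and the last one
  have hC : ∀ e : ℝ, symb (AepsMat A e) ξ =
      (∑ k ∈ Finset.univ.erase (Fin.last d), ξ k • A k)
        + (e⁻¹ * ξ (Fin.last d)) • A (Fin.last d) := by
    intro e
    simp only [symb, AepsMat]
    rw [← Finset.sum_erase_add _ _ (Finset.mem_univ (Fin.last d))]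
    congr 1
    · exact Finset.sum_congr rfl fun k hk => by rw [if_neg (Finset.ne_of_mem_erase hk)]
    · rw [if_pos rfl, smul_smul, mul_comm]
  by_cases hxd : ξ (Fin.last d) = 0
  · -- trivial case `ξ_d = 0`: the two matrices coincide
    have hEq : ∀ e : ℝ, symb (AepsMat A e) ξ = A0tildeSymb A ξ := by
      intro e
      ext i j
      rw [hC e]
      simp [A0tildeSymb, Matrix.sum_apply, hxd]
    have hPP0 : ∀ j, P j = P0 :=
      fun j => orthProj_unique (hP j) hP0 fun v => by rw [hEq (ε j)]
    have hfun : (fun j => P j) = fun _ => P0 := funext hPP0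
    rw [hfun]
    exact tendsto_const_nhds
  · -- main case `ξ_d ≠ 0`
    set Ad : Matrix (Fin l) (Fin m) ℝ := A (Fin.last d) with hAd_def
    set Mt : Matrix (Fin l) (Fin m) ℝ := ∑ k ∈ Finset.univ.erase (Fin.last d), ξ k • A k
      with hMt_def
    set ξd : ℝ := ξ (Fin.last d) with hξd_def
    -- Assumption A1 at `e_d` gives `rank A^(d) = r`
    have hAd_rank : Ad.rank = r := by
      have hne : (Pi.single (Fin.last d) 1 : Fin (d+1) → ℝ) ≠ 0 := by
        intro h0
        have h1 := congrFun h0 (Fin.last d)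
        simp at h1
      have h := hA1 (Pi.single (Fin.last d) 1) hne
      have hs : symb A (Pi.single (Fin.last d) 1) = Ad := by
        simp only [symb]
        rw [Finset.sum_eq_single (Fin.last d)]
        · simp [hAd_def]
        · intro k _ hk
          rw [Pi.single_eq_of_ne hk, zero_smul]
        · intro h'; exact absurd (Finset.mem_univ _) h'
      rwa [hs] at h
    -- Assumption A2: the number of nonzero rows of `A^(d)` is `r`
    have hcard : Fintype.card {i : Fin l // Ad i ≠ 0} = r := by
      rw [Fintype.card_subtype]
      unfold NoDependentRows at hA2
      rw [← hAd_rank, hAd_def]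
      convert hA2 using 2
    -- the matrix of nonzero rows of the row-rescaled symbol
    set W : ℝ → Matrix {i : Fin l // Ad i ≠ 0} (Fin m) ℝ :=
      fun e => Matrix.of fun i j => e * Mt i.1 j + ξd * Ad i.1 j with hW_def
    have hW_apply : ∀ (e : ℝ) (i : {i : Fin l // Ad i ≠ 0}) (j : Fin m),
        W e i j = e * Mt i.1 j + ξd * Ad i.1 j := fun e i j => rfl
    have hMt_apply : ∀ (i : Fin l) (j : Fin m),
        Mt i j = ∑ k ∈ Finset.univ.erase (Fin.last d), ξ k * A k i j := by
      intro i j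
      rw [hMt_def, Matrix.sum_apply]
      simp [Matrix.smul_apply]
    -- rows of the rescaled symbol
    have hCrow : ∀ (e : ℝ) (i : Fin l),
        symb (AepsMat A e) ξ i = fun j => Mt i j + (e⁻¹ * ξd) * Ad i j := by
      intro e i; funext j
      rw [hC e]
      simp [Matrix.add_apply, Matrix.smul_apply]
    have hCrow0 : ∀ (e : ℝ) (i : Fin l), Ad i = 0 →
        symb (AepsMat A e) ξ i = Mt i := by
      intro e i hi; funext j
      rw [hCrow e i]
      simp [congrFun hi j]
    have hWrow : ∀ (e : ℝ), e ≠ 0 → ∀ i : {i : Fin l // Ad i ≠ 0},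
        W e i = e • symb (AepsMat A e) ξ i.1 := by
      intro e he i; funext j
      rw [Pi.smul_apply, hCrow e i.1, hW_apply]
      simp only [smul_eq_mul]
      field_simp
    -- rows of the limit symbol
    have hA0row1 : ∀ (i : Fin l) (hi : Ad i ≠ 0), A0tildeSymb A ξ i = W 0 ⟨i, hi⟩ := by
      intro i hi; funext j
      simp only [A0tildeSymb, Matrix.of_apply]
      rw [← hξd_def, ← hAd_def, if_neg (smul_ne_zero hxd hi), hW_apply]
      simp
    have hA0row0 : ∀ (i : Fin l), Ad i = 0 → A0tildeSymb A ξ i = Mt i := by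
      intro i hi; funext j
      simp only [A0tildeSymb, Matrix.of_apply]
      rw [← hξd_def, ← hAd_def, if_pos (by rw [hi, smul_zero]), hMt_apply]
    -- the rows of `W 0` are linearly independent, by A1 + A2
    have hW0row : ∀ i : {i : Fin l // Ad i ≠ 0}, W 0 i = ξd • Ad i.1 := by
      intro i; funext j
      rw [hW_apply]
      simp
    have hrange0 : LinearMap.range (W 0).vecMulLinear = Submodule.span ℝ (Set.range Ad) := by
      rw [range_vecMulLinear]
      apply le_antisymm
      · rw [Submodule.span_le]
        rintro x ⟨i, rfl⟩
        change W 0 i ∈ _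
        rw [hW0row i]
        exact Submodule.smul_mem _ _ (Submodule.subset_span ⟨i.1, rfl⟩)
      · rw [Submodule.span_le]
        rintro x ⟨i, rfl⟩
        by_cases hi : Ad i = 0
        · rw [hi]; exact Submodule.zero_mem _
        · have hx : Ad i = ξd⁻¹ • W 0 ⟨i, hi⟩ := by
            rw [hW0row ⟨i, hi⟩, smul_smul, inv_mul_cancel₀ hxd, one_smul]
          rw [hx]
          exact Submodule.smul_mem _ _ (Submodule.subset_span ⟨⟨i, hi⟩, rfl⟩)
    have hinj0 : Function.Injective (W 0).vecMulLinear := by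
      have hfin : Module.finrank ℝ (LinearMap.range (W 0).vecMulLinear) = r := by
        rw [hrange0]
        have h := Matrix.rank_eq_finrank_span_cols Adᵀ
        rw [Matrix.rank_transpose, hAd_rank] at h
        exact h.symm
      have h1 := LinearMap.finrank_range_add_finrank_ker (W 0).vecMulLinear
      rw [hfin, Module.finrank_fintype_fun_eq_card, hcard] at h1
      rw [← LinearMap.ker_eq_bot]
      exact Submodule.finrank_eq_zero.mp (by omega)
    have hdet0 : (W 0 * (W 0)ᵀ).det ≠ 0 := gram_det_ne_zero _ hinj0
    -- continuity
    have hWcont : Continuous W := by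
      apply continuous_matrix
      intro i j
      show Continuous fun e : ℝ => e * Mt i.1 j + ξd * Ad i.1 j
      exact (continuous_id.mul continuous_const).add continuous_const
    have hdetcont : Continuous fun e => (W e * (W e)ᵀ).det :=
      (hWcont.matrix_mul hWcont.matrix_transpose).matrix_det
    -- the candidate projections
    set Q : ℝ → Matrix (Fin m) (Fin m) ℝ :=
      fun e => 1 - (W e)ᵀ * ((W e * (W e)ᵀ)⁻¹ * W e) with hQ_def
    have hQcont : ContinuousAt Q 0 := by
      have halt : Q = fun e => 1 - ((W e * (W e)ᵀ).det)⁻¹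
          • ((W e)ᵀ * ((W e * (W e)ᵀ).adjugate * W e)) := by
        funext e
        simp only [hQ_def]
        rw [Matrix.inv_def, Ring.inverse_eq_inv, Matrix.smul_mul, Matrix.mul_smul]
      rw [halt]
      exact ContinuousAt.sub continuousAt_const
        ((hdetcont.continuousAt.inv₀ hdet0).smul
          ((hWcont.matrix_transpose.matrix_mul
            (((hWcont.matrix_mul hWcont.matrix_transpose).matrix_adjugate).matrix_mul
              hWcont)).continuousAt))
    -- algebraic properties of `Q e`
    have hWQ : ∀ e : ℝ, (W e * (W e)ᵀ).det ≠ 0 → W e * Q e = 0 := by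
      intro e hdet
      simp only [hQ_def]
      exact (orthproj_of_gram (W e) hdet).2.2.1
    have hQt : ∀ e : ℝ, (W e * (W e)ᵀ).det ≠ 0 → (Q e)ᵀ = Q e := by
      intro e hdet
      simp only [hQ_def]
      exact (orthproj_of_gram (W e) hdet).1
    have hQQ : ∀ e : ℝ, (W e * (W e)ᵀ).det ≠ 0 → Q e * Q e = Q e := by
      intro e hdet
      simp only [hQ_def]
      exact (orthproj_of_gram (W e) hdet).2.1
    have hQfix : ∀ e : ℝ, (W e * (W e)ᵀ).det ≠ 0 → ∀ v, W e *ᵥ v = 0 → Q e *ᵥ v = v := by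
      intro e hdet
      simp only [hQ_def]
      exact (orthproj_of_gram (W e) hdet).2.2.2
    -- the key step: rows `M_i` with `[A^(d)]^i = 0` annihilate `Q e`, by constant rank
    have hKrow : ∀ (e : ℝ), 0 < e → (W e * (W e)ᵀ).det ≠ 0 →
        ∀ i : Fin l, Ad i = 0 → Mt i ᵥ* Q e = 0 := by
      intro e hepos hdet i hi
      have hrankC : (symb (AepsMat A e) ξ).rank = r := by
        have hupd : symb A (Function.update ξ (Fin.last d) (e⁻¹ * ξd)) =
            symb (AepsMat A e) ξ := by
          rw [hC e]
          simp only [symb]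
          rw [← Finset.sum_erase_add _ _ (Finset.mem_univ (Fin.last d))]
          congr 1
          · exact Finset.sum_congr rfl fun k hk => by
              rw [Function.update_of_ne (Finset.ne_of_mem_erase hk)]
          · rw [Function.update_self, hAd_def, hξd_def]
        have hne : Function.update ξ (Fin.last d) (e⁻¹ * ξd) ≠ 0 := by
          intro h0
          have h1 := congrFun h0 (Fin.last d)
          rw [Function.update_self] at h1
          exact mul_ne_zero (inv_ne_zero (ne_of_gt hepos)) hxd (by simpa using h1)
        have h := hA1 _ hne
        rwa [hupd] at h
      have hinj := gram_inj (W e) hdet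
      have hle : LinearMap.range (W e).vecMulLinear
          ≤ LinearMap.range (symb (AepsMat A e) ξ).vecMulLinear := by
        rw [range_vecMulLinear, range_vecMulLinear, Submodule.span_le]
        rintro x ⟨i', rfl⟩
        change W e i' ∈ _
        rw [hWrow e (ne_of_gt hepos) i']
        exact Submodule.smul_mem _ _ (Submodule.subset_span ⟨i'.1, rfl⟩)
      have heq := range_eq_of_le_of_rank (W e) _ hinj hle (by rw [hrankC, hcard])
      have hmem : Mt i ∈ LinearMap.range (W e).vecMulLinear := by
        rw [heq]
        refine ⟨Pi.single i 1, ?_⟩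
        rw [Matrix.vecMulLinear_apply, Matrix.single_one_vecMul]
        exact hCrow0 e i hi
      obtain ⟨c, hc⟩ := hmem
      rw [← hc, Matrix.vecMulLinear_apply, Matrix.vecMul_vecMul, hWQ e hdet,
        Matrix.vecMul_zero]
    -- `Q e` is the orthogonal projection onto the kernel of the rescaled symbol
    have hQproj : ∀ e : ℝ, 0 < e → (W e * (W e)ᵀ).det ≠ 0 →
        IsOrthProjOntoKer (symb (AepsMat A e) ξ) (Q e) := by
      intro e hepos hdet
      have hCQ : symb (AepsMat A e) ξ * Q e = 0 := by
        ext i j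
        rw [mul_row]
        by_cases hi : Ad i = 0
        · rw [hCrow0 e i hi, hKrow e hepos hdet i hi]
          simp
        · have hrow : symb (AepsMat A e) ξ i = e⁻¹ • W e ⟨i, hi⟩ := by
            rw [hWrow e (ne_of_gt hepos) ⟨i, hi⟩, smul_smul,
              inv_mul_cancel₀ (ne_of_gt hepos), one_smul]
          rw [hrow, Matrix.smul_vecMul, ← mul_row, hWQ e hdet]
          simp
      refine ⟨hQt e hdet, hQQ e hdet, ?_, ?_⟩
      · intro v
        rw [Matrix.mulVec_mulVec, hCQ, Matrix.zero_mulVec]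
      · intro v hv
        apply hQfix e hdet
        funext i
        show W e i ⬝ᵥ v = 0
        have h : symb (AepsMat A e) ξ i.1 ⬝ᵥ v = 0 := congrFun hv i.1
        rw [hWrow e (ne_of_gt hepos) i, smul_dotProduct, h, smul_zero]
    -- pass to the limit in the key row fact
    have hKrow0 : ∀ i : Fin l, Ad i = 0 → Mt i ᵥ* Q 0 = 0 := by
      intro i hi
      have hcontAt : ContinuousAt (fun e => Mt i ᵥ* Q e) 0 :=
        (continuous_vecMul_right (Mt i)).continuousAt.comp hQcont
      have hev : ∀ᶠ e in 𝓝[>] (0:ℝ), Mt i ᵥ* Q e = 0 := by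
        have h1 : ∀ᶠ e in 𝓝 (0:ℝ), (W e * (W e)ᵀ).det ≠ 0 :=
          hdetcont.continuousAt.eventually_ne hdet0
        filter_upwards [eventually_nhdsWithin_of_eventually_nhds h1, self_mem_nhdsWithin]
          with e he1 he2
        exact hKrow e he2 he1 i hi
      have h2 : Tendsto (fun e => Mt i ᵥ* Q e) (𝓝[>] (0:ℝ)) (𝓝 (Mt i ᵥ* Q 0)) :=
        hcontAt.tendsto.mono_left nhdsWithin_le_nhds
      have h3 : Tendsto (fun e => Mt i ᵥ* Q e) (𝓝[>] (0:ℝ)) (𝓝 0) :=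
        Tendsto.congr' (Filter.EventuallyEq.symm hev) tendsto_const_nhds
      exact tendsto_nhds_unique h2 h3
    -- `Q 0` is the orthogonal projection onto the kernel of the limit symbol
    have hQ0proj : IsOrthProjOntoKer (A0tildeSymb A ξ) (Q 0) := by
      have hA0Q : A0tildeSymb A ξ * Q 0 = 0 := by
        ext i j
        rw [mul_row]
        by_cases hi : Ad i = 0
        · rw [hA0row0 i hi, hKrow0 i hi]
          simp
        · rw [hA0row1 i hi, ← mul_row, hWQ 0 hdet0]
          simp
      refine ⟨hQt 0 hdet0, hQQ 0 hdet0, ?_, ?_⟩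
      · intro v
        rw [Matrix.mulVec_mulVec, hA0Q, Matrix.zero_mulVec]
      · intro v hv
        apply hQfix 0 hdet0
        funext i
        obtain ⟨i, hi⟩ := i
        show W 0 ⟨i, hi⟩ ⬝ᵥ v = 0
        have h : A0tildeSymb A ξ i ⬝ᵥ v = 0 := congrFun hv i
        rw [← hA0row1 i hi]
        exact h
    -- conclusion
    have hU : ∀ᶠ j in atTop, (W (ε j) * (W (ε j))ᵀ).det ≠ 0 :=
      hεlim.eventually (hdetcont.continuousAt.eventually_ne hdet0)
    have hPQ : ∀ᶠ j in atTop, P j = Q (ε j) := by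
      filter_upwards [hU] with j hj
      exact orthProj_unique (hP j) (hQproj (ε j) (hεpos j) hj) fun v => Iff.rfl
    have hP0Q : P0 = Q 0 := orthProj_unique hP0 hQ0proj fun v => Iff.rfl
    rw [hP0Q]
    have h1 : Tendsto (Q ∘ ε) atTop (𝓝 (Q 0)) :=
      Filter.Tendsto.comp hQcont hεlim
    exact Tendsto.congr' (Filter.EventuallyEq.symm hPQ) h1

end
end
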